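/- arXiv:2407.07379 — 9 statements merged into one kernel-verified Lean document; each statement's English description precedes it below -/
import Mathlib

section
/- Let h ∈ ℝ³ with h₁² + h₂² - h₃² < 0 and h₃ < 0, and suppose h₁² + h₂² - h₃² = -R² with R > 1 (i.e. h₃² - h₁² - h₂² > 1). Then for all u in the cone {u : u₁² + u₂² ≤ u₃², u₃ ≥ 0}, one has u₁h₁ + u₂h₂ + u₃h₃ + √(u₃² - u₁² - u₂²) ≤ 0, with equality iff u = 0. -/
/-!
Write `q = √(u₃² - u₁² - u₂²)`, so that `(u₁, u₂, q)` has Euclidean length `u₃`. By Cauchy–Schwarz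
`u₁h₁ + u₂h₂ + q ≤ u₃ √(h₁² + h₂² + 1)`, and `h₁² + h₂² + 1 = h₃² - (R² - 1) < h₃²` because `R > 1`.
Hence the expression is `< u₃ (|h₃| + h₃) = 0` as soon as `u₃ > 0`, while the apex `u₃ = 0` of the
cone forces `u = 0`.
-/

theorem sq_mul_add_mul_add_mul_le (a b c x y z : ℝ) :
    (a * x + b * y + c * z) ^ 2 ≤ (a ^ 2 + b ^ 2 + c ^ 2) * (x ^ 2 + y ^ 2 + z ^ 2) := by
  nlinarith [sq_nonneg (a * y - b * x), sq_nonneg (a * z - c * x), sq_nonneg (b * z - c * y)]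

theorem add_mul_neg_of_sq_le {s u k h : ℝ} (hs : s ^ 2 ≤ u ^ 2 * k) (hk : k < h ^ 2) (hh : h < 0)
    (hu : 0 < u) : s + u * h < 0 := by
  have hlt : s ^ 2 < (-(u * h)) ^ 2 := by
    calc s ^ 2 ≤ u ^ 2 * k := hs
      _ < u ^ 2 * h ^ 2 := by gcongr
      _ = (-(u * h)) ^ 2 := by ring
  have habs : |s| < -(u * h) := abs_lt_of_sq_lt_sq hlt (by nlinarith)
  linarith [le_abs_self s]

theorem timelike_pairing_add_sqrt_neg {h1 h2 h3 : ℝ} (hh : h1 ^ 2 + h2 ^ 2 + 1 < h3 ^ 2)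
    (hh3 : h3 < 0) {u1 u2 u3 : ℝ} (hcone : u1 ^ 2 + u2 ^ 2 ≤ u3 ^ 2) (hu3 : 0 < u3) :
    u1 * h1 + u2 * h2 + u3 * h3 + Real.sqrt (u3 ^ 2 - u1 ^ 2 - u2 ^ 2) < 0 := by
  set q := Real.sqrt (u3 ^ 2 - u1 ^ 2 - u2 ^ 2)
  have hq : q ^ 2 = u3 ^ 2 - u1 ^ 2 - u2 ^ 2 := Real.sq_sqrt (by linarith)
  have hcs : (u1 * h1 + u2 * h2 + q) ^ 2 ≤ u3 ^ 2 * (h1 ^ 2 + h2 ^ 2 + 1) := by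
    have := sq_mul_add_mul_add_mul_le u1 u2 q h1 h2 1
    rw [show u1 ^ 2 + u2 ^ 2 + q ^ 2 = u3 ^ 2 by linarith] at this
    simpa [mul_comm] using this
  have := add_mul_neg_of_sq_le hcs hh hh3 hu3
  linarith

theorem normal_R_gt_one_max_zero (h1 h2 h3 R : ℝ)
    (hR : h1 ^ 2 + h2 ^ 2 - h3 ^ 2 = -R ^ 2) (hR1 : 1 < R) (hh3 : h3 < 0) :
    ∀ u1 u2 u3 : ℝ, u1 ^ 2 + u2 ^ 2 ≤ u3 ^ 2 → 0 ≤ u3 →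
      (u1 * h1 + u2 * h2 + u3 * h3 + Real.sqrt (u3 ^ 2 - u1 ^ 2 - u2 ^ 2) ≤ 0 ∧
       (u1 * h1 + u2 * h2 + u3 * h3 + Real.sqrt (u3 ^ 2 - u1 ^ 2 - u2 ^ 2) = 0 ↔
         (u1, u2, u3) = (0, 0, 0))) := by
  intro u1 u2 u3 hcone hu3
  have hh : h1 ^ 2 + h2 ^ 2 + 1 < h3 ^ 2 := by nlinarith
  rcases hu3.eq_or_lt with rfl | hu3
  · obtain ⟨rfl, rfl⟩ : u1 = 0 ∧ u2 = 0 := ⟨by nlinarith, by nlinarith⟩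
    simp
  · have hneg := timelike_pairing_add_sqrt_neg hh hh3 hcone hu3
    refine ⟨hneg.le, ⟨fun h => absurd h hneg.ne, fun hu => ?_⟩⟩
    simp only [Prod.mk.injEq] at hu
    linarith [hu.2.2]
end

section
/- Let h ∈ ℝ³ with h₃² - h₁² - h₂² = 1 and h₃ < 0. Then for u = (h₁, h₂, -h₃) we have u₁h₁ + u₂h₂ + u₃h₃ + √(u₃² - u₁² - u₂²) = h₁² + h₂² - h₃² + 1 = 0, and this is the maximum value of u₁h₁ + u₂h₂ + u₃h₃ + √(u₃² - u₁² - u₂²) over the cone {u : u₁² + u₂² ≤ u₃², u₃ ≥ 0}; that is, the maximum over the cone equals 0 and is attained at u = (h₁, h₂, -h₃). -/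
theorem normal_R_eq_one_maximizer (h1 h2 h3 : ℝ)
    (hR : h3 ^ 2 - h1 ^ 2 - h2 ^ 2 = 1) (hh3 : h3 < 0) :
    h1 * h1 + h2 * h2 + (-h3) * h3 +
      Real.sqrt ((-h3) ^ 2 - h1 ^ 2 - h2 ^ 2) = 0 ∧
    (∀ u1 u2 u3 : ℝ, u1 ^ 2 + u2 ^ 2 ≤ u3 ^ 2 → 0 ≤ u3 →
      u1 * h1 + u2 * h2 + u3 * h3 + Real.sqrt (u3 ^ 2 - u1 ^ 2 - u2 ^ 2) ≤ 0) := by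
  constructor
  · have : (-h3) ^ 2 - h1 ^ 2 - h2 ^ 2 = 1 := by nlinarith
    rw [this, Real.sqrt_one]
    nlinarith
  · intro u1 u2 u3 hu hu3
    set s := Real.sqrt (u3 ^ 2 - u1 ^ 2 - u2 ^ 2) with hs
    have hs0 : 0 ≤ s := Real.sqrt_nonneg _
    have hssq : s ^ 2 = u3 ^ 2 - u1 ^ 2 - u2 ^ 2 := Real.sq_sqrt (by linarith)
    have hcs : (u1 * h1 + u2 * h2 + s) ^ 2 ≤ u3 ^ 2 * h3 ^ 2 := by
      nlinarith [sq_nonneg (u1 * h2 - u2 * h1), sq_nonneg (u1 - s * h1),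
        sq_nonneg (u2 - s * h2)]
    have hkey : u1 * h1 + u2 * h2 + s ≤ -(u3 * h3) := by
      have h4 : 0 ≤ -(u3 * h3) := by nlinarith
      rcases le_or_gt (u1 * h1 + u2 * h2 + s) 0 with hle | hlt
      · linarith
      · nlinarith [mul_lt_mul_of_pos_left hlt hlt]
    linarith
end

section
/- Let h ∈ ℝ³ satisfy h₃² - h₁² - h₂² = R² with 0 < R < 1 and h₃ < 0. Then the function u ↦ u₁h₁ + u₂h₂ + u₃h₃ + √(u₃² - u₁² - u₂²) is unbounded above on the cone {u : u₁² + u₂² ≤ u₃², u₃ ≥ 0}. -/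
/-! Since `h₃² - h₁² - h₂² = R²` with `h₃ < 0`, the vector `(h₁, h₂, -h₃)` lies in the forward
light cone and has Lorentzian length `R`. Along the ray `t • (h₁, h₂, -h₃)` the linear part equals
`-t R²` and the square root equals `t R`, so the function grows like `t R (1 - R)`, which is
unbounded when `0 < R < 1`. -/

section LightConeRay

variable {h1 h2 h3 R t : ℝ}

theorem lorentz_quadratic_smul_eq (hR : h3 ^ 2 - h1 ^ 2 - h2 ^ 2 = R ^ 2) :
    (-(t * h3)) ^ 2 - (t * h1) ^ 2 - (t * h2) ^ 2 = (t * R) ^ 2 := by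
  linear_combination t ^ 2 * hR

theorem smul_mem_light_cone (hR : h3 ^ 2 - h1 ^ 2 - h2 ^ 2 = R ^ 2) :
    (t * h1) ^ 2 + (t * h2) ^ 2 ≤ (-(t * h3)) ^ 2 := by
  nlinarith [lorentz_quadratic_smul_eq (t := t) hR, sq_nonneg (t * R)]

theorem pairing_add_sqrt_along_ray (hR : h3 ^ 2 - h1 ^ 2 - h2 ^ 2 = R ^ 2) (hR0 : 0 ≤ R)
    (ht : 0 ≤ t) :
    t * h1 * h1 + t * h2 * h2 + -(t * h3) * h3
        + Real.sqrt ((-(t * h3)) ^ 2 - (t * h1) ^ 2 - (t * h2) ^ 2) = t * (R * (1 - R)) := by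
  rw [lorentz_quadratic_smul_eq hR, Real.sqrt_sq (mul_nonneg ht hR0)]
  linear_combination (-t) * hR

end LightConeRay

theorem normal_R_lt_one_unbounded (h1 h2 h3 R : ℝ)
    (hR : h3 ^ 2 - h1 ^ 2 - h2 ^ 2 = R ^ 2) (hR0 : 0 < R) (hR1 : R < 1)
    (hh3 : h3 < 0) :
    ∀ M : ℝ, ∃ u1 u2 u3 : ℝ, u1 ^ 2 + u2 ^ 2 ≤ u3 ^ 2 ∧ 0 ≤ u3 ∧
      M < u1 * h1 + u2 * h2 + u3 * h3 + Real.sqrt (u3 ^ 2 - u1 ^ 2 - u2 ^ 2) := by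
  intro M
  have hgrowth : 0 < R * (1 - R) := mul_pos hR0 (sub_pos.mpr hR1)
  obtain ⟨t, ht, hMt⟩ := exists_pos_lt_mul hgrowth M
  refine ⟨t * h1, t * h2, -(t * h3), smul_mem_light_cone hR, ?_, ?_⟩
  · exact neg_nonneg.mpr (mul_nonpos_of_nonneg_of_nonpos ht.le hh3.le)
  · rwa [pairing_add_sqrt_along_ray hR hR0.le ht.le]
end

section
/- Let a, θ₀ ∈ ℝ. The curve (x(t), y(t), z(t)) with x(t) = tanh a (sin θ₀ − sin(θ₀ − t cosh a)), y(t) = tanh a (cos(θ₀ − t cosh a) − cos θ₀), z(t) = t(1/cosh a + cosh a)/2 + tanh² a · sin(t cosh a)/2, together with h₁(t) = sinh a cos(θ₀ − t cosh a), h₂(t) = sinh a sin(θ₀ − t cosh a), h₃ = −cosh a, satisfies the system ẋ = h₁, ẏ = h₂, ż = −y h₁/2 + x h₂/2 − h₃, ḣ₁ = −h₂h₃, ḣ₂ = h₁h₃, ḣ₃ = 0, with initial condition (x,y,z)(0) = (0,0,0). -/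
/-!
Along the trajectory the phase `θ₀ - t cosh a` rotates uniformly, so every component except `z` is
differentiated by the chain rule and `tanh a * cosh a = sinh a`. For `z`, the term `-y h₁ + x h₂`
collapses by the cosine subtraction formula to `tanh a * sinh a * (cos (t cosh a) - 1)`, and
`cosh² a - sinh² a = 1` turns `tanh a * sinh a` into `cosh a - 1 / cosh a`.
-/

open Real

lemma Real.tanh_mul_cosh (a : ℝ) : tanh a * cosh a = sinh a := by
  rw [tanh_eq_sinh_div_cosh, div_mul_cancel₀ _ (cosh_pos a).ne']

lemma Real.tanh_mul_sinh (a : ℝ) : tanh a * sinh a = cosh a - 1 / cosh a := by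
  have hc : cosh a ≠ 0 := (cosh_pos a).ne'
  rw [tanh_eq_sinh_div_cosh]
  field_simp
  linear_combination -cosh_sq_sub_sinh_sq a

lemma hasDerivAt_sin_sub_mul (θ c t : ℝ) :
    HasDerivAt (fun t => sin (θ - t * c)) (-(cos (θ - t * c) * c)) t := by
  simpa using ((hasDerivAt_mul_const c).const_sub θ).sin

lemma hasDerivAt_cos_sub_mul (θ c t : ℝ) :
    HasDerivAt (fun t => cos (θ - t * c)) (sin (θ - t * c) * c) t := by
  simpa using ((hasDerivAt_mul_const c).const_sub θ).cos

lemma cross_cos_sin_eq_cos_sub (θ ψ : ℝ) :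
    -(cos ψ - cos θ) * cos ψ + (sin θ - sin ψ) * sin ψ = cos (θ - ψ) - 1 := by
  rw [cos_sub]
  linear_combination -sin_sq_add_cos_sq ψ

theorem normal_extremal_parametrization (a θ₀ : ℝ) (x y z h1 h2 : ℝ → ℝ) (h3 : ℝ)
    (hx : x = fun t => Real.tanh a * (Real.sin θ₀ - Real.sin (θ₀ - t * Real.cosh a)))
    (hy : y = fun t => Real.tanh a * (Real.cos (θ₀ - t * Real.cosh a) - Real.cos θ₀))
    (hz : z = fun t => t * (1 / Real.cosh a + Real.cosh a) / 2 +
      Real.tanh a ^ 2 * Real.sin (t * Real.cosh a) / 2)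
    (hh1 : h1 = fun t => Real.sinh a * Real.cos (θ₀ - t * Real.cosh a))
    (hh2 : h2 = fun t => Real.sinh a * Real.sin (θ₀ - t * Real.cosh a))
    (hh3 : h3 = -Real.cosh a) :
    (∀ t, HasDerivAt x (h1 t) t) ∧
    (∀ t, HasDerivAt y (h2 t) t) ∧
    (∀ t, HasDerivAt z (-(y t) * h1 t / 2 + x t * h2 t / 2 - h3) t) ∧
    (∀ t, HasDerivAt h1 (-(h2 t * h3)) t) ∧
    (∀ t, HasDerivAt h2 (h1 t * h3) t) ∧
    x 0 = 0 ∧ y 0 = 0 ∧ z 0 = 0 := by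
  subst hx hy hz hh1 hh2 hh3
  refine ⟨fun t => ?_, fun t => ?_, fun t => ?_, fun t => ?_, fun t => ?_, by simp, by simp,
    by simp⟩
  · refine (((hasDerivAt_sin_sub_mul θ₀ _ t).const_sub _).const_mul _).congr_deriv ?_
    linear_combination cos (θ₀ - t * cosh a) * tanh_mul_cosh a
  · refine (((hasDerivAt_cos_sub_mul θ₀ _ t).sub_const _).const_mul _).congr_deriv ?_
    linear_combination sin (θ₀ - t * cosh a) * tanh_mul_cosh a
  · refine (((hasDerivAt_mul_const _).div_const 2).add
      ((((hasDerivAt_mul_const _).sin).const_mul _).div_const 2)).congr_deriv ?_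
    have hcross := cross_cos_sin_eq_cos_sub θ₀ (θ₀ - t * cosh a)
    rw [sub_sub_cancel] at hcross
    linear_combination -(tanh a * sinh a / 2) * hcross
      + tanh a * cos (t * cosh a) / 2 * tanh_mul_cosh a
      + tanh_mul_sinh a / 2
  · refine ((hasDerivAt_cos_sub_mul θ₀ _ t).const_mul _).congr_deriv ?_
    ring
  · refine ((hasDerivAt_sin_sub_mul θ₀ _ t).const_mul _).congr_deriv ?_
    ring
end

section
/- Let h₃ ≠ 0 and h₂⁰ ∈ ℝ, and set C = arsinh(h₂⁰/h₃), τ(t) = C + |h₃|t, h₁⁰ = −√((h₂⁰)² + h₃²). Define h₁(t) = |h₃|(cosh C − cosh τ) + h₁⁰, h₂(t) = h₃ sinh τ, x(t) = sinh τ − sinh C, y(t) = sgn(h₃)(cosh τ − cosh C), z(t) = (h₃t + sinh(h₃t))/2. Then along this curve, h₁(t) = −√(h₂(t)² + h₃²) for all t, and the curve satisfies ẋ = √(h₂² + h₃²), ẏ = h₂, ż = −(y/2)ẋ + (x/2)h₂ + h₃, with (x,y,z)(0) = (0,0,0). -/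
/-!
Writing τ = C + |h₃| t, the identity cosh² − sinh² = 1 gives √(h₂² + h₃²) = |h₃| cosh τ along the
curve, and at t = 0 it gives |h₃| cosh C = √((h₂⁰)² + h₃²) because sinh C = h₂⁰ / h₃; this is the
constraint on h₁. The equations for x and y are then the derivatives of sinh τ and cosh τ
(with sgn(h₃) |h₃| = h₃), and the one for z reduces, via
cosh τ cosh C − sinh τ sinh C = cosh (|h₃| t) = cosh (h₃ t), to ż = h₃ (1 + cosh (h₃ t)) / 2.
-/

open Real

theorem Real.sign_mul_abs (r : ℝ) : Real.sign r * |r| = r := by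
  rcases lt_trichotomy r 0 with h | rfl | h
  · rw [sign_of_neg h, abs_of_neg h, neg_one_mul, neg_neg]
  · rw [abs_zero, mul_zero]
  · rw [sign_of_pos h, abs_of_pos h, one_mul]

theorem sqrt_sq_mul_sinh_add_sq (a s : ℝ) : √((a * sinh s) ^ 2 + a ^ 2) = |a| * cosh s := by
  rw [← sqrt_sq (by positivity : 0 ≤ |a| * cosh s), mul_pow, mul_pow, sq_abs, cosh_sq]
  congr 1
  ring

theorem abs_mul_cosh_arsinh_div {b : ℝ} (hb : b ≠ 0) (a : ℝ) :
    |b| * cosh (arsinh (a / b)) = √(a ^ 2 + b ^ 2) := by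
  rw [← sqrt_sq_mul_sinh_add_sq, sinh_arsinh, mul_div_cancel₀ a hb]

theorem cosh_abs_mul (a t : ℝ) : cosh (|a| * t) = cosh (a * t) := by
  rw [← cosh_abs, abs_mul, abs_abs, ← abs_mul, cosh_abs]

theorem hasDerivAt_sinh_const_add_mul_sub (C a t : ℝ) :
    HasDerivAt (fun t => sinh (C + a * t) - sinh C) (a * cosh (C + a * t)) t := by
  have := (((hasDerivAt_id t).const_mul a).const_add C).sinh.sub_const (sinh C)
  exact this.congr_deriv (by simp [mul_comm])

theorem hasDerivAt_cosh_const_add_mul_sub (C a t : ℝ) :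
    HasDerivAt (fun t => cosh (C + a * t) - cosh C) (a * sinh (C + a * t)) t := by
  have := (((hasDerivAt_id t).const_mul a).const_add C).cosh.sub_const (cosh C)
  exact this.congr_deriv (by simp [mul_comm])

theorem hasDerivAt_mul_add_sinh_mul_div_two (a t : ℝ) :
    HasDerivAt (fun t => (a * t + sinh (a * t)) / 2) (a * (1 + cosh (a * t)) / 2) t := by
  have hlin : HasDerivAt (fun t => a * t) a t := by simpa using (hasDerivAt_id t).const_mul a
  exact ((hlin.add hlin.sinh).div_const 2).congr_deriv (by ring)

theorem neg_mul_cosh_sub_add_mul_sinh_sub (a τ C : ℝ) :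
    -((cosh τ - cosh C) / 2) * (a * cosh τ) + (sinh τ - sinh C) / 2 * (a * sinh τ) + a
      = a * (1 + cosh (τ - C)) / 2 := by
  rw [cosh_sub]
  linear_combination (-a / 2) * cosh_sq_sub_sinh_sq τ

theorem abnormal_extremal_second (h3 h20 : ℝ) (hh3 : h3 ≠ 0)
    (C : ℝ) (hC : C = Real.arsinh (h20 / h3))
    (τ : ℝ → ℝ) (hτ : τ = fun t => C + |h3| * t)
    (h10 : ℝ) (hh10 : h10 = -Real.sqrt (h20 ^ 2 + h3 ^ 2))
    (h1 h2 x y z : ℝ → ℝ)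
    (hh1 : h1 = fun t => |h3| * (Real.cosh C - Real.cosh (τ t)) + h10)
    (hh2 : h2 = fun t => h3 * Real.sinh (τ t))
    (hx : x = fun t => Real.sinh (τ t) - Real.sinh C)
    (hy : y = fun t => Real.sign h3 * (Real.cosh (τ t) - Real.cosh C))
    (hz : z = fun t => (h3 * t + Real.sinh (h3 * t)) / 2) :
    (∀ t, h1 t = -Real.sqrt (h2 t ^ 2 + h3 ^ 2)) ∧
    (∀ t, HasDerivAt x (Real.sqrt (h2 t ^ 2 + h3 ^ 2)) t) ∧
    (∀ t, HasDerivAt y (h2 t) t) ∧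
    (∀ t, HasDerivAt z
      (-(y t / 2) * Real.sqrt (h2 t ^ 2 + h3 ^ 2) + (x t / 2) * h2 t + h3) t) ∧
    x 0 = 0 ∧ y 0 = 0 ∧ z 0 = 0 := by
  subst hτ hh1 hh2 hx hy hz hh10
  simp only [sqrt_sq_mul_sinh_add_sq]
  refine ⟨fun t => ?_, hasDerivAt_sinh_const_add_mul_sub C |h3|, fun t => ?_, fun t => ?_,
    by simp, by simp, by simp⟩
  · rw [← abs_mul_cosh_arsinh_div hh3, ← hC]
    ring
  · refine ((hasDerivAt_cosh_const_add_mul_sub C |h3| t).const_mul (sign h3)).congr_deriv ?_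
    rw [← mul_assoc, Real.sign_mul_abs]
  · refine (hasDerivAt_mul_add_sinh_mul_div_two h3 t).congr_deriv ?_
    have hspeed := neg_mul_cosh_sub_add_mul_sinh_sub h3 (C + |h3| * t) C
    rw [add_sub_cancel_left, cosh_abs_mul] at hspeed
    linear_combination -hspeed +
      (cosh (C + |h3| * t) - cosh C) / 2 * cosh (C + |h3| * t) * Real.sign_mul_abs h3
end

section
/- Let h₃ ≠ 0 and h₁⁰, h₂⁰ ∈ ℝ with (h₂⁰)² + h₃² − (h₁⁰)² = 1. Define s = h₃t and x(t) = (h₂⁰(cosh s − 1) − h₁⁰ sinh s)/h₃, y(t) = (h₂⁰ sinh s − h₁⁰(cosh s − 1))/h₃, z(t) = ((2h₃² − (h₁⁰)² + (h₂⁰)²)s + ((h₁⁰)² − (h₂⁰)²) sinh s)/(2h₃²), and let (h₁, h₂) solve ḣ₁ = −h₂h₃, ḣ₂ = −h₁h₃ with initial values (h₁(0), h₂(0)) = (h₁⁰, h₂⁰). Then (x, y, z) solves ẋ = −h₁, ẏ = h₂, ż = y h₁/2 + x h₂/2 + h₃ with (x, y, z)(0) = (0, 0, 0). -/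
open Real

theorem normal_extremal_second (h3 h10 h20 : ℝ) (hh3 : h3 ≠ 0)
    (hnorm : h20 ^ 2 + h3 ^ 2 - h10 ^ 2 = 1)
    (h1 h2 : ℝ → ℝ)
    (hd1 : ∀ t, HasDerivAt h1 (-(h2 t * h3)) t)
    (hd2 : ∀ t, HasDerivAt h2 (-(h1 t * h3)) t)
    (h10' : h1 0 = h10) (h20' : h2 0 = h20)
    (x y z : ℝ → ℝ)
    (hx : x = fun t => (h20 * (Real.cosh (h3 * t) - 1) - h10 * Real.sinh (h3 * t)) / h3)
    (hy : y = fun t => (h20 * Real.sinh (h3 * t) - h10 * (Real.cosh (h3 * t) - 1)) / h3)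
    (hz : z = fun t => ((2 * h3 ^ 2 - h10 ^ 2 + h20 ^ 2) * (h3 * t) +
      (h10 ^ 2 - h20 ^ 2) * Real.sinh (h3 * t)) / (2 * h3 ^ 2)) :
    (∀ t, HasDerivAt x (-(h1 t)) t) ∧
    (∀ t, HasDerivAt y (h2 t) t) ∧
    (∀ t, HasDerivAt z (y t * h1 t / 2 + x t * h2 t / 2 + h3) t) ∧
    x 0 = 0 ∧ y 0 = 0 ∧ z 0 = 0 := by
  have hlin : ∀ t, HasDerivAt (fun t => h3 * t) h3 t := fun t => by
    simpa using (hasDerivAt_id t).const_mul h3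
  -- F = (h1+h2) * exp(h3 t) is constant
  have hF : ∀ t, ((h1 t + h2 t) * Real.exp (h3 * t)) = (h10 + h20) := by
    have hd : ∀ t, HasDerivAt (fun t => (h1 t + h2 t) * Real.exp (h3 * t)) 0 t := by
      intro t
      have : HasDerivAt (fun t => (h1 t + h2 t) * Real.exp (h3 * t))
          ((-(h2 t * h3) + -(h1 t * h3)) * Real.exp (h3 * t) + (h1 t + h2 t) * (Real.exp (h3 * t) * h3)) t :=
        (((hd1 t).add (hd2 t)).mul ((hlin t).exp))
      convert this using 1
      ring
    have hc := is_const_of_deriv_eq_zero (fun t => (hd t).differentiableAt)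
      (fun t => (hd t).deriv)
    intro t
    have := hc t 0
    simpa [h10', h20'] using this
  have hG : ∀ t, ((h1 t - h2 t) * Real.exp (-(h3 * t))) = (h10 - h20) := by
    have hd : ∀ t, HasDerivAt (fun t => (h1 t - h2 t) * Real.exp (-(h3 * t))) 0 t := by
      intro t
      have : HasDerivAt (fun t => (h1 t - h2 t) * Real.exp (-(h3 * t)))
          ((-(h2 t * h3) - -(h1 t * h3)) * Real.exp (-(h3 * t)) + (h1 t - h2 t) * (Real.exp (-(h3 * t)) * -h3)) t :=
        (((hd1 t).sub (hd2 t)).mul (((hlin t).neg).exp))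
      convert this using 1
      ring
    have hc := is_const_of_deriv_eq_zero (fun t => (hd t).differentiableAt)
      (fun t => (hd t).deriv)
    intro t
    have := hc t 0
    simpa [h10', h20'] using this
  have hmul : ∀ t : ℝ, Real.exp (-(h3*t)) * Real.exp (h3*t) = 1 := by
    intro t; rw [← Real.exp_add]; simp
  have h1e : ∀ t, h1 t = h10 * Real.cosh (h3 * t) - h20 * Real.sinh (h3 * t) := by
    intro t
    have f := hF t; have g := hG t; have m := hmul t
    have key : h1 t = ((h10 + h20) * Real.exp (-(h3*t)) + (h10 - h20) * Real.exp (h3*t)) / 2 := by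
      linear_combination (Real.exp (-(h3*t)) * f + Real.exp (h3*t) * g) / 2 - h1 t * m
    rw [key, Real.cosh_eq, Real.sinh_eq, Real.exp_neg]
    have := (Real.exp_pos (h3*t)).ne'
    field_simp
    ring
  have h2e : ∀ t, h2 t = h20 * Real.cosh (h3 * t) - h10 * Real.sinh (h3 * t) := by
    intro t
    have f := hF t; have g := hG t; have m := hmul t
    have key : h2 t = ((h10 + h20) * Real.exp (-(h3*t)) - (h10 - h20) * Real.exp (h3*t)) / 2 := by
      linear_combination (Real.exp (-(h3*t)) * f - Real.exp (h3*t) * g) / 2 - h2 t * m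
    rw [key, Real.cosh_eq, Real.sinh_eq, Real.exp_neg]
    have := (Real.exp_pos (h3*t)).ne'
    field_simp
    ring
  have hcosh : ∀ t, HasDerivAt (fun t => Real.cosh (h3 * t)) (Real.sinh (h3 * t) * h3) t :=
    fun t => (hlin t).cosh
  have hsinh : ∀ t, HasDerivAt (fun t => Real.sinh (h3 * t)) (Real.cosh (h3 * t) * h3) t :=
    fun t => (hlin t).sinh
  have hsq : ∀ t, Real.cosh (h3*t) ^ 2 - Real.sinh (h3*t) ^ 2 = 1 :=
    fun t => Real.cosh_sq_sub_sinh_sq (h3*t)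
  refine ⟨?_, ?_, ?_, ?_, ?_, ?_⟩
  · intro t
    subst hx
    have : HasDerivAt (fun t => (h20 * (Real.cosh (h3 * t) - 1) - h10 * Real.sinh (h3 * t)) / h3)
        ((h20 * (Real.sinh (h3*t) * h3) - h10 * (Real.cosh (h3*t) * h3)) / h3) t :=
      ((((hcosh t).sub_const 1).const_mul h20).sub ((hsinh t).const_mul h10)).div_const h3
    convert this using 1
    rw [h1e t]; field_simp; ring
  · intro t
    subst hy
    have : HasDerivAt (fun t => (h20 * Real.sinh (h3 * t) - h10 * (Real.cosh (h3 * t) - 1)) / h3)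
        ((h20 * (Real.cosh (h3*t) * h3) - h10 * (Real.sinh (h3*t) * h3)) / h3) t :=
      (((hsinh t).const_mul h20).sub (((hcosh t).sub_const 1).const_mul h10)).div_const h3
    convert this using 1
    rw [h2e t]; field_simp
  · intro t
    subst hz hx hy
    have : HasDerivAt (fun t => ((2 * h3 ^ 2 - h10 ^ 2 + h20 ^ 2) * (h3 * t) +
        (h10 ^ 2 - h20 ^ 2) * Real.sinh (h3 * t)) / (2 * h3 ^ 2))
        (((2 * h3 ^ 2 - h10 ^ 2 + h20 ^ 2) * h3 +
        (h10 ^ 2 - h20 ^ 2) * (Real.cosh (h3*t) * h3)) / (2 * h3 ^ 2)) t :=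
      ((((hlin t).const_mul _).add ((hsinh t).const_mul _)).div_const _)
    convert this using 1
    rw [h1e t, h2e t]
    have := hsq t
    field_simp
    linear_combination (h20^2-h10^2)*this
  · simp [hx]
  · simp [hy]
  · simp [hz]
end

section
/- For the system ẋ = u₁, ẏ = u₂, ż = −(y/2)u₁ + (x/2)u₂ + u₃ with controls constrained to the cone U = {u : u₂² + u₃² ≤ u₁², u₁ ≥ 0}, if an admissible trajectory starting at the origin reaches a point (x₁, y₁, 0), then necessarily x₁ ≥ |y₁|. -/
theorem attainable_z_zero (T : ℝ) (hT : 0 ≤ T) (x y z u1 u2 u3 : ℝ → ℝ)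
    (hx : ∀ t ∈ Set.Icc 0 T, HasDerivAt x (u1 t) t)
    (hy : ∀ t ∈ Set.Icc 0 T, HasDerivAt y (u2 t) t)
    (hz : ∀ t ∈ Set.Icc 0 T, HasDerivAt z
      (-(y t / 2) * u1 t + (x t / 2) * u2 t + u3 t) t)
    (hU : ∀ t ∈ Set.Icc 0 T, u2 t ^ 2 + u3 t ^ 2 ≤ u1 t ^ 2 ∧ 0 ≤ u1 t)
    (hx0 : x 0 = 0) (hy0 : y 0 = 0) (hz0 : z 0 = 0)
    (hzT : z T = 0) :
    |y T| ≤ x T := by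
  have habs : ∀ t ∈ Set.Icc 0 T, |u2 t| ≤ u1 t := by
    intro t ht
    obtain ⟨h1, h2⟩ := hU t ht
    have : u2 t ^ 2 ≤ u1 t ^ 2 := by nlinarith [sq_nonneg (u3 t)]
    calc |u2 t| ≤ |u1 t| := by
          rw [← Real.sqrt_sq_eq_abs, ← Real.sqrt_sq_eq_abs]
          exact Real.sqrt_le_sqrt this
      _ = u1 t := abs_of_nonneg h2
  have mono : ∀ (f u : ℝ → ℝ), (∀ t ∈ Set.Icc 0 T, HasDerivAt f (u t) t) →
      (∀ t ∈ Set.Icc 0 T, 0 ≤ u t) → f 0 ≤ f T := by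
    intro f u hf hu
    have hmono : MonotoneOn f (Set.Icc 0 T) := by
      apply monotoneOn_of_deriv_nonneg (convex_Icc 0 T)
      · exact fun t ht => (hf t ht).continuousAt.continuousWithinAt
      · intro t ht
        rw [interior_Icc] at ht
        exact ((hf t (Set.Ioo_subset_Icc_self ht)).differentiableAt).differentiableWithinAt
      · intro t ht
        rw [interior_Icc] at ht
        rw [(hf t (Set.Ioo_subset_Icc_self ht)).deriv]
        exact hu t (Set.Ioo_subset_Icc_self ht)
    exact hmono (Set.left_mem_Icc.mpr hT) (Set.right_mem_Icc.mpr hT) hT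
  have h1 : (x + y) 0 ≤ (x + y) T := by
    apply mono (x + y) (fun t => u1 t + u2 t)
    · exact fun t ht => (hx t ht).add (hy t ht)
    · intro t ht
      have := habs t ht
      have := abs_le.mp this
      linarith [this.1]
  have h2 : (x - y) 0 ≤ (x - y) T := by
    apply mono (x - y) (fun t => u1 t - u2 t)
    · exact fun t ht => (hx t ht).sub (hy t ht)
    · intro t ht
      have := abs_le.mp (habs t ht)
      linarith [this.2]
  simp only [Pi.add_apply, Pi.sub_apply, hx0, hy0] at h1 h2
  rw [abs_le]
  constructor <;> linarith
end

section
/- For any admissible trajectory of ẋ = u₁, ẏ = u₂, ż = −(y/2)u₁ + (x/2)u₂ + u₃, u ∈ U = {u₂² + u₃² ≤ u₁², u₁ ≥ 0}, starting at the origin and ending at a point (x₁, y₁, z₁) with z₁ ≠ 0, one has |z₁| ≤ (t + sinh t)/2 where t = arcosh((x₁² − y₁²)/2 + 1); in particular x₁² − y₁² ≥ 0 is necessary. -/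
noncomputable def lorF (σ : ℝ) : ℝ :=
  (Real.log (σ/2 + 1 + Real.sqrt (σ^2 + 4*σ)/2) + Real.sqrt (σ^2 + 4*σ)/2)/2

lemma lorF_zero : lorF 0 = 0 := by
  simp [lorF]

lemma lorF_hasDeriv {σ : ℝ} (hσ : 0 < σ) :
    HasDerivAt lorF ((σ+4)/(4*Real.sqrt (σ^2+4*σ))) σ := by
  have hq : 0 < σ^2 + 4*σ := by nlinarith
  set G := Real.sqrt (σ^2+4*σ) with hGdef
  have hG : 0 < G := Real.sqrt_pos.2 hq
  have hG2 : G^2 = σ^2 + 4*σ := Real.sq_sqrt hq.le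
  have h1 : HasDerivAt (fun s : ℝ => s^2 + 4*s) (2*σ + 4) σ := by
    simpa [Pi.add_def] using ((hasDerivAt_pow 2 σ).add ((hasDerivAt_id σ).const_mul 4))
  have h2 : HasDerivAt (fun s : ℝ => Real.sqrt (s^2 + 4*s)) (1/(2*G) * (2*σ+4)) σ :=
    (Real.hasDerivAt_sqrt hq.ne').comp σ h1
  have harg : 0 < σ/2 + 1 + G/2 := by positivity
  have h3 : HasDerivAt (fun s : ℝ => s/2 + 1 + Real.sqrt (s^2+4*s)/2)
      (1/2 + (1/(2*G) * (2*σ+4))/2) σ := by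
    exact (((hasDerivAt_id σ).div_const 2).add_const 1).add (h2.div_const 2)
  have h4 : HasDerivAt (fun s : ℝ => Real.log (s/2 + 1 + Real.sqrt (s^2+4*s)/2))
      ((σ/2 + 1 + G/2)⁻¹ * (1/2 + (1/(2*G) * (2*σ+4))/2)) σ :=
    by have := (Real.hasDerivAt_log harg.ne').comp σ h3; exact this
  have h5 : HasDerivAt lorF
      (((σ/2 + 1 + G/2)⁻¹ * (1/2 + (1/(2*G) * (2*σ+4))/2) + (1/(2*G) * (2*σ+4))/2)/2) σ :=
    (h4.add (h2.div_const 2)).div_const 2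
  convert h5 using 1
  have harg' : σ/2 + 1 + G/2 ≠ 0 := harg.ne'
  field_simp
  ring_nf

lemma lorF_contAt {σ : ℝ} (hσ : 0 ≤ σ) : ContinuousAt lorF σ := by
  have hsq : ContinuousAt (fun s : ℝ => Real.sqrt (s^2 + 4*s)) σ :=
    Real.continuous_sqrt.continuousAt.comp (by fun_prop)
  have harg : ContinuousAt (fun s : ℝ => s/2 + 1 + Real.sqrt (s^2 + 4*s)/2) σ := by
    fun_prop
  have hne : σ/2 + 1 + Real.sqrt (σ^2 + 4*σ)/2 ≠ 0 := by
    have := Real.sqrt_nonneg (σ^2 + 4*σ); positivity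
  have hlog : ContinuousAt (fun s : ℝ => Real.log (s/2 + 1 + Real.sqrt (s^2 + 4*s)/2)) σ :=
    harg.log hne
  exact ((hlog.add (hsq.div_const 2)).div_const 2)

lemma loglem {r : ℝ} (hr : 0 ≤ r) : Real.log (1 + r) ≤ 2 * Real.sqrt r := by
  have hs := Real.sqrt_nonneg r
  have h1 : (1:ℝ) + r ≤ (1 + Real.sqrt r)^2 := by nlinarith [Real.sq_sqrt hr]
  have h2 : Real.log (1 + r) ≤ Real.log ((1 + Real.sqrt r)^2) :=
    Real.log_le_log (by linarith) h1
  have h3 : Real.log ((1 + Real.sqrt r)^2) = 2 * Real.log (1 + Real.sqrt r) := by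
    rw [Real.log_pow]; push_cast; ring
  have h4 : Real.log (1 + Real.sqrt r) ≤ Real.sqrt r := by
    have := Real.log_le_sub_one_of_pos (show (0:ℝ) < 1 + Real.sqrt r by linarith)
    linarith
  linarith

lemma mono_aux (T : ℝ) (g g' : ℝ → ℝ)
    (hg : ∀ t ∈ Set.Icc (0:ℝ) T, HasDerivAt g (g' t) t)
    (h0 : ∀ t ∈ Set.Icc (0:ℝ) T, 0 ≤ g' t) :
    ∀ t ∈ Set.Icc (0:ℝ) T, g 0 ≤ g t := by
  intro t ht
  rcases ht with ⟨ht0, htT⟩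
  have hmono : MonotoneOn g (Set.Icc (0:ℝ) T) := by
    apply monotoneOn_of_deriv_nonneg (convex_Icc 0 T)
    · exact fun s hs => (hg s hs).continuousAt.continuousWithinAt
    · intro s hs
      rw [interior_Icc] at hs
      exact (hg s (Set.Ioo_subset_Icc_self hs)).differentiableAt.differentiableWithinAt
    · intro s hs
      rw [interior_Icc] at hs
      rw [(hg s (Set.Ioo_subset_Icc_self hs)).deriv]
      exact h0 s (Set.Ioo_subset_Icc_self hs)
  exact hmono ⟨le_rfl, le_trans ht0 htT⟩ ⟨ht0, htT⟩ ht0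

set_option maxHeartbeats 2000000 in
lemma lor_ineq_abs (a b δ σ G w u1 u2 u3 : ℝ)
    (hδ : 0 < δ) (ha : 0 ≤ a) (hba : -a ≤ b)
    (hσdef : σ = a^2 - b^2 + δ) (hσ : 0 < σ)
    (hG : 0 < G) (hG2 : G^2 = σ^2 + 4*σ) (hw : 0 < w) (hw2 : w^2 = δ^2 + 4*δ)
    (hGle : G ≤ σ + 2) (hwleG : w ≤ G) (hC1 : δ*G ≤ σ*w)
    (hu1 : 0 ≤ u1) (hcon : u2^2 + u3^2 ≤ u1^2) :
    0 ≤ (σ + 4)/(4*G) * (2*a*u1 - 2*b*u2) + w * ((a + w)⁻¹ * u1)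
      - (-(b/2)*u1 + (a/2)*u2 + u3) := by
  have haw : 0 < a + w := by linarith
  obtain ⟨h, hhdef⟩ : ∃ h : ℝ, h = w/(a+w) := ⟨_, rfl⟩
  obtain ⟨A, hAdef⟩ : ∃ A : ℝ, A = b/2 + a*(σ+4)/(2*G) + w/(a+w) := ⟨_, rfl⟩
  obtain ⟨B, hBdef⟩ : ∃ B : ℝ, B = a/2 + b*(σ+4)/(2*G) := ⟨_, rfl⟩
  have hh : 0 < h := hhdef ▸ div_pos hw haw
  -- step 1 : δ/σ ≤ h^2 + 2*a*h/G
  have P1 : δ * (G*(a+w)^2) ≤ σ*(G*w^2 + 2*a*w*(a+w)) := by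
    have sa : δ*G*(a+w)^2 ≤ σ*w*(a+w)^2 :=
      mul_le_mul_of_nonneg_right hC1 (sq_nonneg (a+w))
    have inner : 0 ≤ G*w - w^2 + a^2 := by
      nlinarith [mul_le_mul_of_nonneg_right hwleG hw.le, sq_nonneg a]
    have sb : 0 ≤ σ*w*(G*w - w^2 + a^2) :=
      mul_nonneg (mul_nonneg hσ.le hw.le) inner
    nlinarith [sa, sb]
  have step1 : δ/σ ≤ h^2 + 2*a*h/G := by
    have expand : h^2 + 2*a*h/G - δ/σ
        = (σ*(G*w^2 + 2*a*w*(a+w)) - δ*(G*(a+w)^2))/(σ*G*(a+w)^2) := by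
      rw [hhdef]; field_simp; try ring
    have : 0 ≤ h^2 + 2*a*h/G - δ/σ := by
      rw [expand]
      apply div_nonneg (by linarith) (by positivity)
    linarith
  -- step 2 : 2*a/G ≤ b + a*(σ+4)/G
  have num2 : 2*a ≤ b*G + a*(σ+4) := by
    nlinarith [mul_le_mul_of_nonneg_right hba hG.le,
      mul_nonneg ha (show 0 ≤ σ + 2 - G by linarith)]
  have step2 : 2*a/G ≤ b + a*(σ+4)/G := by
    have expand : b + a*(σ+4)/G - 2*a/G = (b*G + a*(σ+4) - 2*a)/G := by
      field_simp; try ring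
    have : 0 ≤ b + a*(σ+4)/G - 2*a/G := by
      rw [expand]; apply div_nonneg (by linarith) hG.le
    linarith
  -- A nonneg
  have hA0 : 0 ≤ A := by
    have hA_eq : A = (b*G + a*(σ+4))/(2*G) + h := by
      rw [hAdef, hhdef]; field_simp; try ring
    have num : 0 ≤ b*G + a*(σ+4) := by
      nlinarith [mul_le_mul_of_nonneg_right hba hG.le,
        mul_nonneg ha (show 0 ≤ σ + 2 - G by linarith)]
    rw [hA_eq]
    have := div_nonneg num (by positivity : (0:ℝ) ≤ 2*G)
    linarith
  -- A^2 - B^2 ≥ 1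
  have hG2' : G^2 = σ*(σ+4) := by rw [hG2]; ring
  have e1 : A^2 - B^2 = (a^2-b^2)*((σ+4)^2 - G^2)/(4*G^2) + h^2 + h*(b + a*(σ+4)/G) := by
    rw [hAdef, hBdef, hhdef]; field_simp; try ring
  have e2 : (a^2-b^2)*((σ+4)^2 - G^2)/(4*G^2) = (a^2-b^2)/σ := by
    rw [hG2, div_eq_div_iff (by positivity) hσ.ne']
    ring
  have e3 : (a^2-b^2)/σ = 1 - δ/σ := by
    field_simp
    linarith [hσdef]
  have hAB : 1 + B^2 ≤ A^2 := by
    have m1 : h*(2*a/G) ≤ h*(b + a*(σ+4)/G) := mul_le_mul_of_nonneg_left step2 hh.le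
    have m2 : h*(2*a/G) = 2*a*h/G := by ring
    nlinarith [e1, e2, e3, step1, m1]
  -- Cauchy-Schwarz
  have hcs : u3 + B*u2 ≤ A*u1 := by
    have c1 : (u3 + B*u2)^2 ≤ (1+B^2)*u1^2 := by
      nlinarith [sq_nonneg (u2 - B*u3),
        mul_nonneg (by positivity : (0:ℝ) ≤ 1+B^2) (sub_nonneg.2 hcon)]
    have c2 : (u3 + B*u2)^2 ≤ (A*u1)^2 := by
      calc (u3 + B*u2)^2 ≤ (1+B^2)*u1^2 := c1
      _ ≤ A^2*u1^2 := mul_le_mul_of_nonneg_right hAB (sq_nonneg u1)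
      _ = (A*u1)^2 := by ring
    nlinarith [c2, mul_nonneg hA0 hu1]
  -- assemble
  have goal_eq : (σ + 4)/(4*G) * (2*a*u1 - 2*b*u2) + w * ((a + w)⁻¹ * u1)
      - (-(b/2)*u1 + (a/2)*u2 + u3) = A*u1 - (B*u2 + u3) := by
    rw [hAdef, hBdef]; field_simp; try ring
  rw [goal_eq]
  linarith

lemma lor_ineq (a b δ u1 u2 u3 : ℝ) (hδ : 0 < δ) (hba : -a ≤ b) (hab : b ≤ a)
    (hu1 : 0 ≤ u1) (hcon : u2^2 + u3^2 ≤ u1^2) :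
    0 ≤ (a^2 - b^2 + δ + 4)/(4*Real.sqrt ((a^2 - b^2 + δ)^2 + 4*(a^2 - b^2 + δ)))
          * (2*a*u1 - 2*b*u2)
      + Real.sqrt (δ^2 + 4*δ) * ((a + Real.sqrt (δ^2 + 4*δ))⁻¹ * u1)
      - (-(b/2)*u1 + (a/2)*u2 + u3) := by
  have ha : 0 ≤ a := by linarith
  have hs : 0 ≤ a^2 - b^2 := by nlinarith
  obtain ⟨σ, hσdef⟩ : ∃ σ : ℝ, σ = a^2 - b^2 + δ := ⟨_, rfl⟩
  have hσ : 0 < σ := by rw [hσdef]; linarith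
  have hσδ : δ ≤ σ := by rw [hσdef]; linarith
  have hq : (0:ℝ) < σ^2 + 4*σ := by nlinarith
  have hqw : (0:ℝ) < δ^2 + 4*δ := by nlinarith
  rw [← hσdef]
  obtain ⟨G, hGdef⟩ : ∃ G : ℝ, G = Real.sqrt (σ^2 + 4*σ) := ⟨_, rfl⟩
  obtain ⟨w, hwdef⟩ : ∃ w : ℝ, w = Real.sqrt (δ^2 + 4*δ) := ⟨_, rfl⟩
  rw [← hGdef, ← hwdef]
  have hG : 0 < G := hGdef ▸ Real.sqrt_pos.2 hq
  have hw : 0 < w := hwdef ▸ Real.sqrt_pos.2 hqw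
  have hG2 : G^2 = σ^2 + 4*σ := hGdef ▸ Real.sq_sqrt hq.le
  have hw2 : w^2 = δ^2 + 4*δ := hwdef ▸ Real.sq_sqrt hqw.le
  have hGle : G ≤ σ + 2 := by
    rw [hGdef]
    calc Real.sqrt (σ^2+4*σ) ≤ Real.sqrt ((σ+2)^2) := Real.sqrt_le_sqrt (by nlinarith)
    _ = σ + 2 := Real.sqrt_sq (by positivity)
  have hwleG : w ≤ G := by
    rw [hGdef, hwdef]
    exact Real.sqrt_le_sqrt (by nlinarith)
  have hC1 : δ*G ≤ σ*w := by
    have k1 : δ^2*G^2 = δ^2*(σ^2 + 4*σ) := by rw [hG2]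
    have k2 : σ^2*w^2 = σ^2*(δ^2 + 4*δ) := by rw [hw2]
    nlinarith [k1, k2, mul_pos hσ hw, mul_pos hδ hG,
      mul_nonneg (mul_nonneg hδ.le hσ.le) (sub_nonneg.2 hσδ)]
  exact lor_ineq_abs a b δ σ G w u1 u2 u3 hδ ha hba hσdef hσ hG hG2 hw hw2 hGle hwleG hC1 hu1 hcon

lemma lor_core (T : ℝ) (hT : 0 ≤ T) (x y z u1 u2 u3 : ℝ → ℝ)
    (hx : ∀ t ∈ Set.Icc 0 T, HasDerivAt x (u1 t) t)
    (hy : ∀ t ∈ Set.Icc 0 T, HasDerivAt y (u2 t) t)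
    (hz : ∀ t ∈ Set.Icc 0 T, HasDerivAt z
      (-(y t / 2) * u1 t + (x t / 2) * u2 t + u3 t) t)
    (hU : ∀ t ∈ Set.Icc 0 T, u2 t ^ 2 + u3 t ^ 2 ≤ u1 t ^ 2 ∧ 0 ≤ u1 t)
    (hx0 : x 0 = 0) (hy0 : y 0 = 0) (hz0 : z 0 = 0)
    (δ : ℝ) (hδ : 0 < δ) :
    z T ≤ lorF (x T^2 - y T^2 + δ) - lorF δ
      + Real.sqrt (δ^2 + 4*δ) *
        (Real.log (x T + Real.sqrt (δ^2 + 4*δ)) - Real.log (Real.sqrt (δ^2 + 4*δ))) := by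
  have hTmem : T ∈ Set.Icc (0:ℝ) T := ⟨hT, le_rfl⟩
  have h0mem : (0:ℝ) ∈ Set.Icc (0:ℝ) T := ⟨le_rfl, hT⟩
  have hqw : (0:ℝ) < δ^2 + 4*δ := by nlinarith
  have hw : 0 < Real.sqrt (δ^2 + 4*δ) := Real.sqrt_pos.2 hqw
  set w : ℝ := Real.sqrt (δ^2 + 4*δ) with hwdef
  -- u2 bounds
  have hu21 : ∀ t ∈ Set.Icc (0:ℝ) T, u2 t ≤ u1 t := by
    intro t ht
    obtain ⟨hc, h1⟩ := hU t ht
    nlinarith [sq_nonneg (u3 t)]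
  have hu21' : ∀ t ∈ Set.Icc (0:ℝ) T, -u1 t ≤ u2 t := by
    intro t ht
    obtain ⟨hc, h1⟩ := hU t ht
    nlinarith [sq_nonneg (u3 t)]
  -- x - y and x + y nonneg
  have hmy : ∀ t ∈ Set.Icc (0:ℝ) T, 0 ≤ x t - y t := by
    intro t ht
    have := mono_aux T (fun t => x t - y t) (fun t => u1 t - u2 t)
      (fun s hs => (hx s hs).sub (hy s hs))
      (fun s hs => by have := hu21 s hs; linarith) t ht
    simp only [hx0, hy0] at this
    linarith
  have hpy : ∀ t ∈ Set.Icc (0:ℝ) T, 0 ≤ x t + y t := by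
    intro t ht
    have := mono_aux T (fun t => x t + y t) (fun t => u1 t + u2 t)
      (fun s hs => (hx s hs).add (hy s hs))
      (fun s hs => by have := hu21' s hs; linarith) t ht
    simp only [hx0, hy0] at this
    linarith
  -- the Lyapunov function
  set Φ : ℝ → ℝ := fun t => lorF (x t^2 - y t^2 + δ) + w * Real.log (x t + w) - z t
    with hΦdef
  set D : ℝ → ℝ := fun t =>
    (x t^2 - y t^2 + δ + 4)/(4*Real.sqrt ((x t^2 - y t^2 + δ)^2 + 4*(x t^2 - y t^2 + δ)))
        * (2*x t*u1 t - 2*y t*u2 t)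
      + w * ((x t + w)⁻¹ * u1 t)
      - (-(y t / 2) * u1 t + (x t / 2) * u2 t + u3 t) with hDdef
  have key : Φ 0 ≤ Φ T := by
    apply mono_aux T Φ D ?_ ?_ T hTmem
    · intro t ht
      have hxa : 0 ≤ x t := by have := hmy t ht; have := hpy t ht; linarith
      have hspos : 0 < x t^2 - y t^2 + δ := by
        have h1 := hmy t ht; have h2 := hpy t ht; nlinarith
      have hσ' : HasDerivAt (fun s => x s^2 - y s^2 + δ) (2*x t*u1 t - 2*y t*u2 t) t := by
        have := (((hx t ht).pow 2).sub ((hy t ht).pow 2)).add_const δ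
        refine this.congr_deriv ?_
        push_cast
        ring
      have p1 : HasDerivAt (fun s => lorF (x s^2 - y s^2 + δ))
          (((x t^2 - y t^2 + δ) + 4)/(4*Real.sqrt ((x t^2 - y t^2 + δ)^2 + 4*(x t^2 - y t^2 + δ)))
            * (2*x t*u1 t - 2*y t*u2 t)) t :=
        by have := (lorF_hasDeriv hspos).comp t hσ'; exact this
      have hxw : x t + w ≠ 0 := by positivity
      have p2 : HasDerivAt (fun s => w * Real.log (x s + w))
          (w * ((x t + w)⁻¹ * u1 t)) t :=
        by have := ((Real.hasDerivAt_log hxw).comp t ((hx t ht).add_const w)).const_mul w; exact this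
      exact (p1.add p2).sub (hz t ht)
    · intro t ht
      have h1 := hmy t ht
      have h2 := hpy t ht
      obtain ⟨hc, hu1⟩ := hU t ht
      simp only [hDdef]
      exact lor_ineq (x t) (y t) δ (u1 t) (u2 t) (u3 t) hδ (by linarith) (by linarith) hu1 hc
  simp only [hΦdef, hx0, hy0, hz0] at key
  have hlog0 : Real.log (0 + w) = Real.log w := by norm_num
  simp only [hlog0] at key
  norm_num at key
  linarith [key]

lemma lor_limit (s X zT : ℝ) (hs : 0 ≤ s) (hX : 0 ≤ X)
    (key : ∀ δ : ℝ, 0 < δ → zT ≤ lorF (s + δ) - lorF δ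
      + Real.sqrt (δ^2 + 4*δ) *
        (Real.log (X + Real.sqrt (δ^2 + 4*δ)) - Real.log (Real.sqrt (δ^2 + 4*δ)))) :
    zT ≤ lorF s := by
  have t1 : Filter.Tendsto (fun δ : ℝ => lorF (s + δ)) (nhdsWithin 0 (Set.Ioi 0))
      (nhds (lorF s)) := by
    have h1 : Filter.Tendsto (fun δ : ℝ => s + δ) (nhds 0) (nhds s) := by
      simpa [Pi.add_def] using (continuous_const.add continuous_id).tendsto (0:ℝ)
    exact (lorF_contAt hs).tendsto.comp (h1.mono_left nhdsWithin_le_nhds)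
  have t2 : Filter.Tendsto (fun δ : ℝ => lorF δ) (nhdsWithin 0 (Set.Ioi 0)) (nhds 0) := by
    have := (lorF_contAt le_rfl).tendsto
    rw [lorF_zero] at this
    exact this.mono_left nhdsWithin_le_nhds
  have t3 : Filter.Tendsto (fun δ : ℝ => Real.sqrt (δ^2 + 4*δ) *
      (Real.log (X + Real.sqrt (δ^2 + 4*δ)) - Real.log (Real.sqrt (δ^2 + 4*δ))))
      (nhdsWithin 0 (Set.Ioi 0)) (nhds 0) := by
    apply squeeze_zero'
    · filter_upwards [self_mem_nhdsWithin] with δ (hδ : δ ∈ Set.Ioi 0)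
      have hδ' : (0:ℝ) < δ := hδ
      have hqw : (0:ℝ) < δ^2 + 4*δ := by nlinarith
      have hw : 0 < Real.sqrt (δ^2 + 4*δ) := Real.sqrt_pos.2 hqw
      have : Real.log (Real.sqrt (δ^2 + 4*δ)) ≤ Real.log (X + Real.sqrt (δ^2 + 4*δ)) :=
        Real.log_le_log hw (by linarith)
      have h2 : 0 ≤ Real.log (X + Real.sqrt (δ^2 + 4*δ)) - Real.log (Real.sqrt (δ^2 + 4*δ)) := by
        linarith
      positivity
    · filter_upwards [self_mem_nhdsWithin] with δ (hδ : δ ∈ Set.Ioi 0)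
      have hδ' : (0:ℝ) < δ := hδ
      have hqw : (0:ℝ) < δ^2 + 4*δ := by nlinarith
      set w : ℝ := Real.sqrt (δ^2 + 4*δ) with hwdef
      have hw : 0 < w := Real.sqrt_pos.2 hqw
      have e1 : Real.log (X + w) - Real.log w = Real.log ((X + w)/w) :=
        (Real.log_div (by positivity) hw.ne').symm
      have e2 : (X + w)/w = 1 + X/w := by field_simp; ring
      have e3 : Real.log (1 + X/w) ≤ 2 * Real.sqrt (X/w) := loglem (by positivity)
      have e4 : Real.sqrt (X/w) = Real.sqrt X / Real.sqrt w := Real.sqrt_div hX w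
      have e5 : w * (2 * (Real.sqrt X / Real.sqrt w)) = 2 * Real.sqrt X * (w / Real.sqrt w) := by
        ring
      have e6 : w / Real.sqrt w = Real.sqrt w := Real.div_sqrt
      calc w * (Real.log (X + w) - Real.log w) = w * Real.log (1 + X/w) := by rw [e1, e2]
      _ ≤ w * (2 * (Real.sqrt X / Real.sqrt w)) := by
          apply mul_le_mul_of_nonneg_left _ hw.le
          rw [← e4]; exact e3
      _ = 2 * Real.sqrt X * Real.sqrt w := by rw [e5, e6]
    · have c : Continuous fun δ : ℝ => 2 * Real.sqrt X * Real.sqrt (Real.sqrt (δ^2 + 4*δ)) := by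
        fun_prop
      have h0 : Filter.Tendsto (fun δ : ℝ => 2 * Real.sqrt X * Real.sqrt (Real.sqrt (δ^2 + 4*δ)))
          (nhds 0) (nhds (2 * Real.sqrt X * Real.sqrt (Real.sqrt (0^2 + 4*0)))) := c.tendsto 0
      norm_num at h0
      exact h0.mono_left nhdsWithin_le_nhds
  have tall := (t1.sub t2).add t3
  norm_num at tall
  exact ge_of_tendsto tall
    (Filter.eventually_of_mem self_mem_nhdsWithin (fun δ (hδ : δ ∈ Set.Ioi 0) => key δ hδ))

theorem attainable_z_bound (T : ℝ) (hT : 0 ≤ T) (x y z u1 u2 u3 : ℝ → ℝ)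
    (hx : ∀ t ∈ Set.Icc 0 T, HasDerivAt x (u1 t) t)
    (hy : ∀ t ∈ Set.Icc 0 T, HasDerivAt y (u2 t) t)
    (hz : ∀ t ∈ Set.Icc 0 T, HasDerivAt z
      (-(y t / 2) * u1 t + (x t / 2) * u2 t + u3 t) t)
    (hU : ∀ t ∈ Set.Icc 0 T, u2 t ^ 2 + u3 t ^ 2 ≤ u1 t ^ 2 ∧ 0 ≤ u1 t)
    (hx0 : x 0 = 0) (hy0 : y 0 = 0) (hz0 : z 0 = 0)
    (hzT : z T ≠ 0) :
    0 ≤ x T ^ 2 - y T ^ 2 ∧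
    ∀ t : ℝ, 0 ≤ t → Real.cosh t = (x T ^ 2 - y T ^ 2) / 2 + 1 →
      |z T| ≤ (t + Real.sinh t) / 2 := by
  have hTmem : T ∈ Set.Icc (0:ℝ) T := ⟨hT, le_rfl⟩
  -- basic monotonicity facts
  have hu21 : ∀ t ∈ Set.Icc (0:ℝ) T, u2 t ≤ u1 t := by
    intro t ht
    obtain ⟨hc, h1⟩ := hU t ht
    nlinarith [sq_nonneg (u3 t)]
  have hu21' : ∀ t ∈ Set.Icc (0:ℝ) T, -u1 t ≤ u2 t := by
    intro t ht
    obtain ⟨hc, h1⟩ := hU t ht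
    nlinarith [sq_nonneg (u3 t)]
  have hmy : 0 ≤ x T - y T := by
    have := mono_aux T (fun t => x t - y t) (fun t => u1 t - u2 t)
      (fun s hs => (hx s hs).sub (hy s hs))
      (fun s hs => by have := hu21 s hs; linarith) T hTmem
    simp only [hx0, hy0] at this
    linarith
  have hpy : 0 ≤ x T + y T := by
    have := mono_aux T (fun t => x t + y t) (fun t => u1 t + u2 t)
      (fun s hs => (hx s hs).add (hy s hs))
      (fun s hs => by have := hu21' s hs; linarith) T hTmem
    simp only [hx0, hy0] at this
    linarith
  have hsT : 0 ≤ x T ^ 2 - y T ^ 2 := by nlinarith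
  have hXT : 0 ≤ x T := by linarith
  refine ⟨hsT, ?_⟩
  intro t ht hcosh
  -- one-sided bound for z T
  have bound1 : z T ≤ lorF (x T ^ 2 - y T ^ 2) := by
    apply lor_limit _ _ _ hsT hXT
    intro δ hδ
    exact lor_core T hT x y z u1 u2 u3 hx hy hz hU hx0 hy0 hz0 δ hδ
  -- one-sided bound for -z T by symmetry
  have bound2 : -z T ≤ lorF (x T ^ 2 - y T ^ 2) := by
    have hy' : ∀ s ∈ Set.Icc (0:ℝ) T, HasDerivAt (fun t => -y t) ((fun t => -u2 t) s) s :=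
      fun s hs => (hy s hs).neg
    have hz' : ∀ s ∈ Set.Icc (0:ℝ) T, HasDerivAt (fun t => -z t)
        (-((fun t => -y t) s / 2) * u1 s + (x s / 2) * ((fun t => -u2 t) s)
          + ((fun t => -u3 t) s)) s := by
      intro s hs
      have := (hz s hs).neg
      refine this.congr_deriv ?_
      ring
    have hU' : ∀ s ∈ Set.Icc (0:ℝ) T,
        ((fun t => -u2 t) s) ^ 2 + ((fun t => -u3 t) s) ^ 2 ≤ u1 s ^ 2 ∧ 0 ≤ u1 s := by
      intro s hs
      obtain ⟨hc, h1⟩ := hU s hs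
      constructor
      · dsimp only; nlinarith [hc]
      · exact h1
    have key := lor_core T hT x (fun t => -y t) (fun t => -z t) u1
      (fun t => -u2 t) (fun t => -u3 t) hx hy' hz' hU' hx0 (by simp [hy0]) (by simp [hz0])
    have hsq : ∀ δ : ℝ, x T ^ 2 - (-y T) ^ 2 + δ = x T ^ 2 - y T ^ 2 + δ := by
      intro δ; ring
    apply lor_limit _ _ _ hsT hXT
    intro δ hδ
    have := key δ hδ
    simpa [hsq δ] using this
  -- evaluate lorF at 2 cosh t - 2
  have hs' : x T ^ 2 - y T ^ 2 = 2 * Real.cosh t - 2 := by linarith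
  have hsinh : 0 ≤ Real.sinh t := by
    rw [Real.sinh_eq]
    have := Real.exp_le_exp.2 (show -t ≤ t by linarith)
    linarith
  have harg : (2 * Real.cosh t - 2)^2 + 4 * (2 * Real.cosh t - 2) = (2 * Real.sinh t)^2 := by
    linear_combination 4 * Real.cosh_sq t
  have hsqrt : Real.sqrt ((2 * Real.cosh t - 2)^2 + 4 * (2 * Real.cosh t - 2))
      = 2 * Real.sinh t := by
    rw [harg, Real.sqrt_sq (by positivity)]
  have hval : lorF (x T ^ 2 - y T ^ 2) = (t + Real.sinh t) / 2 := by
    rw [hs']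
    unfold lorF
    rw [hsqrt]
    rw [show (2 * Real.cosh t - 2)/2 + 1 + 2 * Real.sinh t / 2
        = Real.cosh t + Real.sinh t by ring]
    rw [Real.cosh_add_sinh, Real.log_exp]
    ring
  rw [abs_le]
  constructor <;> [linarith [bound2, hval.symm ▸ bound2]; linarith [bound1, hval ▸ bound1]]
end

section
/- Let h ∈ ℝ³ with h₂² + h₃² − h₁² = −R², h₁ < 0, and R > 1. Then for all u in the cone {u : u₂² + u₃² ≤ u₁², u₁ ≥ 0}, u₁h₁ + u₂h₂ + u₃h₃ + √(u₁² − u₂² − u₃²) ≤ 0, with equality iff u = 0. -/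
theorem normal_R_gt_one_second (h1 h2 h3 R : ℝ)
    (hR : h2 ^ 2 + h3 ^ 2 - h1 ^ 2 = -R ^ 2) (hh1 : h1 < 0) (hR1 : 1 < R) :
    ∀ u1 u2 u3 : ℝ, u2 ^ 2 + u3 ^ 2 ≤ u1 ^ 2 → 0 ≤ u1 →
      (u1 * h1 + u2 * h2 + u3 * h3 + Real.sqrt (u1 ^ 2 - u2 ^ 2 - u3 ^ 2) ≤ 0 ∧
       (u1 * h1 + u2 * h2 + u3 * h3 + Real.sqrt (u1 ^ 2 - u2 ^ 2 - u3 ^ 2) = 0 ↔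
         (u1, u2, u3) = (0, 0, 0))) := by
  intro u1 u2 u3 hcone hu1
  have hq0 : 0 ≤ u1 ^ 2 - u2 ^ 2 - u3 ^ 2 := by linarith
  set q := Real.sqrt (u1 ^ 2 - u2 ^ 2 - u3 ^ 2) with hqdef
  have hq : q ^ 2 = u1 ^ 2 - u2 ^ 2 - u3 ^ 2 := Real.sq_sqrt hq0
  have hqnn : 0 ≤ q := Real.sqrt_nonneg _
  have h1sq : h1 ^ 2 = h2 ^ 2 + h3 ^ 2 + R ^ 2 := by linarith
  have hCS : (u2 * h2 + u3 * h3 + q) ^ 2 ≤ u1 ^ 2 * (h2 ^ 2 + h3 ^ 2 + 1) := by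
    nlinarith [sq_nonneg (u2 * h3 - u3 * h2), sq_nonneg (u2 - q * h2),
      sq_nonneg (u3 - q * h3)]
  have hR2 : 1 < R ^ 2 := by nlinarith
  have hu1h1 : u1 * h1 ≤ 0 := mul_nonpos_of_nonneg_of_nonpos hu1 hh1.le
  have hle : u1 * h1 + u2 * h2 + u3 * h3 + q ≤ 0 := by
    by_cases hS : u2 * h2 + u3 * h3 + q ≤ 0
    · linarith
    · push_neg at hS
      nlinarith [sq_nonneg u1, mul_nonneg hu1 hu1, sq_nonneg (u2 * h2 + u3 * h3 + q + u1 * h1)]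
  refine ⟨hle, ?_, ?_⟩
  · intro heq
    have hu10 : u1 = 0 := by
      by_contra hne
      have hu1pos : 0 < u1 := lt_of_le_of_ne hu1 (Ne.symm hne)
      have hSeq : u2 * h2 + u3 * h3 + q = -(u1 * h1) := by linarith
      have hsq : (u2 * h2 + u3 * h3 + q) ^ 2 = u1 ^ 2 * h1 ^ 2 := by rw [hSeq]; ring
      nlinarith [mul_pos hu1pos hu1pos]
    have hu2 : u2 = 0 := by nlinarith
    have hu3 : u3 = 0 := by nlinarith
    simp [hu10, hu2, hu3]
  · intro heq
    simp only [Prod.mk.injEq] at heq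
    obtain ⟨e1, e2, e3⟩ := heq
    subst e1; subst e2; subst e3
    simp [hqdef]
end
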